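/- With the notation of the tacnode GUE-minor kernel, the function B^{β,y}_u(λ) vanishes whenever λ ≥ 0 and u + λ ≥ 0. Consequently B^{β,y2−β}_{u2}(λ−ρ) = 0 for λ ≥ max(ρ, ρ−u2), so the perturbation sum Σ_{λ ≥ 0} (…) B^{β,y2−β}_{u2}(λ−ρ) truncates to λ ≤ max(ρ−1, ρ−1−u2): the tacnode GUE-minor kernel is a finite-rank perturbation of the GUE-minor kernel. -/

import Mathlib

open Complex

/-- Integral over the upward vertical line `L = c + iℝ`. -/
noncomputable def lineInt (c : ℝ) (f : ℂ → ℂ) : ℂ :=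
  ∫ s : ℝ, f ((c : ℂ) + (s : ℝ) * I) * I

/-- The function `ℬ^{β,y}_u(λ)` of the tacnode GUE-minor kernel: a double contour
integral over `Γ₀ = C(0,r0)` and the vertical line `L = c + iℝ` (with `0 < r0 < c`),
plus a single contour integral over `Γ₀`. -/
noncomputable def calB (r0 c β y : ℝ) (u lam : ℤ) : ℂ :=
  ((2 * Real.pi * I) ^ 2)⁻¹ *
    (∮ ζ in C(0, r0), lineInt c (fun ω =>
      (ζ - ω)⁻¹ * (Complex.exp (-2 * ζ ^ 2 + 4 * ζ * (β : ℂ))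
        / Complex.exp (-ω ^ 2 - 2 * ω * (y : ℂ))) * ζ ^ lam * ω ^ u))
  + (2 * Real.pi * I)⁻¹ *
      ∮ ω in C(0, r0),
        ω ^ (u + lam) / Complex.exp (ω ^ 2 - 2 * ω * ((y : ℂ) + 2 * (β : ℂ)))


section Aux
open Metric MeasureTheory Real Set
set_option maxHeartbeats 1000000

lemma single_zero (r0 : ℝ) (h0 : 0 ≤ r0) (a : ℂ) (n : ℕ) :
    (∮ ω in C(0, r0), ω ^ n / Complex.exp (ω ^ 2 - 2 * ω * a)) = 0 := by
  have hd : ∀ z : ℂ, DifferentiableAt ℂ (fun ω : ℂ => ω ^ n / Complex.exp (ω ^ 2 - 2 * ω * a)) z := by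
    intro z
    exact (differentiableAt_pow n).div
      (((differentiableAt_pow 2).sub ((differentiableAt_const (2:ℂ)).mul differentiableAt_id |>.mul_const a)).cexp)
      (Complex.exp_ne_zero _)
  exact circleIntegral_eq_zero_of_differentiable_on_off_countable h0 Set.countable_empty
    (fun z _ => (hd z).continuousAt.continuousWithinAt) (fun z hz => hd z)

lemma auxCauchyZero (r0 : ℝ) (h0 : 0 ≤ r0) {ω : ℂ} (hω : ω ∉ closedBall (0:ℂ) r0) (b K d : ℂ) (l : ℕ) :
    (∮ ζ in C(0, r0), (ζ - ω)⁻¹ * (Complex.exp (-2 * ζ ^ 2 + 4 * ζ * b) / K) * ζ ^ l * d * Complex.I) = 0 := by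
  have hd : ∀ z ∈ closedBall (0:ℂ) r0, DifferentiableAt ℂ
      (fun ζ : ℂ => (ζ - ω)⁻¹ * (Complex.exp (-2 * ζ ^ 2 + 4 * ζ * b) / K) * ζ ^ l * d * Complex.I) z := by
    intro z hz
    have hzω : z - ω ≠ 0 := sub_ne_zero.2 (fun h => hω (h ▸ hz))
    have d1 : DifferentiableAt ℂ (fun ζ : ℂ => (ζ - ω)⁻¹) z :=
      ((differentiableAt_id.sub (differentiableAt_const ω)).inv hzω)
    have d2 : DifferentiableAt ℂ (fun ζ : ℂ => Complex.exp (-2 * ζ ^ 2 + 4 * ζ * b) / K) z :=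
      ((((differentiableAt_const (-2:ℂ)).mul (differentiableAt_pow 2)).add
        (((differentiableAt_const (4:ℂ)).mul differentiableAt_id).mul_const b)).cexp).div_const K
    exact ((((d1.mul d2).mul (differentiableAt_pow l)).mul_const d).mul_const Complex.I)
  exact circleIntegral_eq_zero_of_differentiable_on_off_countable h0 Set.countable_empty
    (fun z hz => (hd z hz).continuousAt.continuousWithinAt)
    (fun z hz => hd z (ball_subset_closedBall hz.1))


lemma bound_aux (r0 c β y : ℝ) (h0 : 0 < r0) (hrc : r0 < c) (u : ℤ) (l : ℕ) (s aζw aw rA : ℝ)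
    (h1 : c - r0 ≤ aζw) (h2 : c ≤ aw) (h3 : aw ≤ c + |s|) (h4 : rA ≤ 2*r0^2 + 4*r0*|β|) :
    r0 * r0^l * (aζw⁻¹ * ((Real.exp rA / Real.exp (s^2 - c^2 - 2*c*y)) * aw^u))
      ≤ (r0 * r0^l * ((c - r0)⁻¹ *
          (Real.exp (2*r0^2 + 4*r0*|β| + c^2 + 2*c*y) *
            (c^u + Real.exp ((u.toNat : ℝ)*c + (u.toNat : ℝ)^2))))) * Real.exp (-(3/4) * s^2) := by
  have hc0 : (0:ℝ) < c := h0.trans hrc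
  have hawpos : (0:ℝ) < aw := hc0.trans_le h2
  set m : ℕ := u.toNat with hm
  have Pnn : (0:ℝ) ≤ aw^u := (zpow_pos hawpos u).le
  have hI : aζw⁻¹ ≤ (c - r0)⁻¹ := inv_anti₀ (by linarith) h1
  have hE : Real.exp rA / Real.exp (s^2 - c^2 - 2*c*y)
      ≤ Real.exp (2*r0^2 + 4*r0*|β| + c^2 + 2*c*y) * Real.exp (-s^2) := by
    rw [← Real.exp_sub, ← Real.exp_add]
    apply Real.exp_le_exp.2
    linarith
  have t4a : aw^u ≤ c^u + (c+|s|)^m := by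
    rcases le_or_gt 0 u with hu | hu
    · obtain ⟨k, rfl⟩ := Int.eq_ofNat_of_zero_le hu
      have hmk : m = k := by simp [hm]
      rw [hmk, zpow_natCast]
      have hle : aw^k ≤ (c+|s|)^k := pow_le_pow_left₀ hawpos.le h3 k
      have hcu : (0:ℝ) ≤ (c:ℝ)^(k:ℤ) := (zpow_pos hc0 _).le
      linarith
    · have hmz : m = 0 := by simp [hm]; omega
      have hcu : aw^u ≤ c^u := by
        obtain ⟨k, hk⟩ : ∃ k : ℕ, u = -(k:ℤ) := ⟨(-u).toNat, by omega⟩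
        subst hk
        rw [zpow_neg, zpow_neg, zpow_natCast, zpow_natCast]
        exact inv_anti₀ (pow_pos hc0 k) (pow_le_pow_left₀ hc0.le h2 k)
      rw [hmz, pow_zero]
      linarith
  have t4b : (c+|s|)^m * Real.exp (-s^2)
      ≤ Real.exp ((m:ℝ)*c + (m:ℝ)^2) * Real.exp (-(3/4)*s^2) := by
    have h1' : c + |s| ≤ Real.exp (c+|s|) := by linarith [Real.add_one_le_exp (c+|s|)]
    have h2' : (c+|s|)^m ≤ Real.exp (c+|s|)^m := pow_le_pow_left₀ (by positivity) h1' m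
    calc (c+|s|)^m * Real.exp (-s^2) ≤ Real.exp (c+|s|)^m * Real.exp (-s^2) :=
          mul_le_mul_of_nonneg_right h2' (Real.exp_nonneg _)
    _ = Real.exp ((m:ℝ)*(c+|s|) + -s^2) := by rw [← Real.exp_nat_mul, ← Real.exp_add]
    _ ≤ Real.exp (((m:ℝ)*c + (m:ℝ)^2) + -(3/4)*s^2) := by
          apply Real.exp_le_exp.2
          nlinarith [sq_nonneg ((m:ℝ) - |s|/2), abs_nonneg s, _root_.sq_abs s]
    _ = _ := by rw [Real.exp_add]
  have t4c : c^u * Real.exp (-s^2) ≤ c^u * Real.exp (-(3/4)*s^2) :=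
    mul_le_mul_of_nonneg_left (Real.exp_le_exp.2 (by nlinarith [sq_nonneg s]))
      (zpow_pos hc0 u).le
  have hP : aw^u * Real.exp (-s^2)
      ≤ (c^u + Real.exp ((m:ℝ)*c + (m:ℝ)^2)) * Real.exp (-(3/4)*s^2) := by
    calc aw^u * Real.exp (-s^2) ≤ (c^u + (c+|s|)^m) * Real.exp (-s^2) :=
          mul_le_mul_of_nonneg_right t4a (Real.exp_nonneg _)
    _ = c^u * Real.exp (-s^2) + (c+|s|)^m * Real.exp (-s^2) := by ring
    _ ≤ c^u * Real.exp (-(3/4)*s^2) + Real.exp ((m:ℝ)*c + (m:ℝ)^2) * Real.exp (-(3/4)*s^2) :=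
          add_le_add t4c t4b
    _ = _ := by ring
  have key : aζw⁻¹ * ((Real.exp rA / Real.exp (s^2 - c^2 - 2*c*y)) * aw^u)
      ≤ (c - r0)⁻¹ * ((Real.exp (2*r0^2 + 4*r0*|β| + c^2 + 2*c*y) *
          (c^u + Real.exp ((m:ℝ)*c + (m:ℝ)^2))) * Real.exp (-(3/4)*s^2)) := by
    have s1 : aζw⁻¹ * ((Real.exp rA / Real.exp (s^2 - c^2 - 2*c*y)) * aw^u)
        ≤ (c - r0)⁻¹ * ((Real.exp (2*r0^2 + 4*r0*|β| + c^2 + 2*c*y) * Real.exp (-s^2)) * aw^u) :=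
      mul_le_mul hI (mul_le_mul_of_nonneg_right hE Pnn)
        (mul_nonneg (div_nonneg (Real.exp_nonneg _) (Real.exp_nonneg _)) Pnn)
        (inv_nonneg.2 (by linarith))
    have s2 : (Real.exp (2*r0^2 + 4*r0*|β| + c^2 + 2*c*y) * Real.exp (-s^2)) * aw^u
        = Real.exp (2*r0^2 + 4*r0*|β| + c^2 + 2*c*y) * (aw^u * Real.exp (-s^2)) := by ring
    have s3 : Real.exp (2*r0^2 + 4*r0*|β| + c^2 + 2*c*y) * (aw^u * Real.exp (-s^2))
        ≤ Real.exp (2*r0^2 + 4*r0*|β| + c^2 + 2*c*y) *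
          ((c^u + Real.exp ((m:ℝ)*c + (m:ℝ)^2)) * Real.exp (-(3/4)*s^2)) :=
      mul_le_mul_of_nonneg_left hP (Real.exp_nonneg _)
    calc aζw⁻¹ * ((Real.exp rA / Real.exp (s^2 - c^2 - 2*c*y)) * aw^u)
        ≤ (c - r0)⁻¹ * ((Real.exp (2*r0^2 + 4*r0*|β| + c^2 + 2*c*y) * Real.exp (-s^2)) * aw^u) := s1
    _ = (c - r0)⁻¹ * (Real.exp (2*r0^2 + 4*r0*|β| + c^2 + 2*c*y) * (aw^u * Real.exp (-s^2))) := by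
          rw [s2]
    _ ≤ (c - r0)⁻¹ * (Real.exp (2*r0^2 + 4*r0*|β| + c^2 + 2*c*y) *
          ((c^u + Real.exp ((m:ℝ)*c + (m:ℝ)^2)) * Real.exp (-(3/4)*s^2))) :=
          mul_le_mul_of_nonneg_left s3 (inv_nonneg.2 (by linarith))
    _ = _ := by ring
  calc r0 * r0^l * (aζw⁻¹ * ((Real.exp rA / Real.exp (s^2 - c^2 - 2*c*y)) * aw^u))
      ≤ r0 * r0^l * ((c - r0)⁻¹ * ((Real.exp (2*r0^2 + 4*r0*|β| + c^2 + 2*c*y) *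
          (c^u + Real.exp ((m:ℝ)*c + (m:ℝ)^2))) * Real.exp (-(3/4)*s^2))) :=
        mul_le_mul_of_nonneg_left key (mul_nonneg h0.le (pow_nonneg h0.le l))
  _ = _ := by push_cast [hm]; ring


lemma double_zero (r0 c β y : ℝ) (h0 : 0 < r0) (hrc : r0 < c) (u : ℤ) (l : ℕ) :
    (∮ ζ in C(0, r0), lineInt c (fun ω =>
      (ζ - ω)⁻¹ * (Complex.exp (-2 * ζ ^ 2 + 4 * ζ * (β : ℂ))
        / Complex.exp (-ω ^ 2 - 2 * ω * (y : ℂ))) * ζ ^ l * ω ^ u)) = 0 := by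
  have hc0 : (0:ℝ) < c := h0.trans hrc
  set μ : Measure ℝ := volume.restrict (Ioc 0 (2 * π)) with hμ
  set g : ℂ → ℂ → ℂ := fun ζ w =>
    (ζ - w)⁻¹ * (Complex.exp (-2 * ζ ^ 2 + 4 * ζ * (β : ℂ))
      / Complex.exp (-w ^ 2 - 2 * w * (y : ℂ))) * ζ ^ l * w ^ u with hg
  set w : ℝ → ℂ := fun s => (c : ℂ) + (s : ℝ) * I with hw
  set F : ℝ → ℝ → ℂ := fun θ s => (circleMap 0 r0 θ * I) * (g (circleMap 0 r0 θ) (w s) * I) with hF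
  -- basic estimates
  have habs_w_ge : ∀ s : ℝ, c ≤ ‖w s‖ := by
    intro s
    have : (w s).re = c := by simp [hw]
    calc c = (w s).re := this.symm
    _ ≤ ‖w s‖ := Complex.re_le_norm _
  have habs_w_le : ∀ s : ℝ, ‖w s‖ ≤ c + |s| := by
    intro s
    calc ‖w s‖ ≤ ‖(c:ℂ)‖ + ‖((s:ℝ) * I)‖ := norm_add_le _ _
    _ = c + |s| := by simp [abs_of_pos hc0]
  have habs_ζ : ∀ θ : ℝ, ‖circleMap 0 r0 θ‖ = r0 := by
    intro θ; simpa [abs_of_pos h0] using norm_circleMap_zero r0 θ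
  have hne : ∀ θ s : ℝ, circleMap 0 r0 θ - w s ≠ 0 := by
    intro θ s
    refine sub_ne_zero.2 (fun h => ?_)
    have := habs_w_ge s
    rw [← h, habs_ζ] at this
    linarith
  have habs_sub : ∀ θ s : ℝ, c - r0 ≤ ‖circleMap 0 r0 θ - w s‖ := by
    intro θ s
    have h1 := norm_sub_norm_le (w s) (circleMap 0 r0 θ)
    rw [norm_sub_rev] at h1
    have h2 := habs_w_ge s
    have h3 := habs_ζ θ
    linarith
  -- real-part computations
  have hreB : ∀ s : ℝ, (-(w s) ^ 2 - 2 * (w s) * (y:ℂ)).re = s^2 - c^2 - 2*c*y := by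
    intro s
    simp [hw, pow_two, Complex.mul_re, Complex.add_re, Complex.sub_re, Complex.neg_re,
      Complex.mul_im, Complex.add_im]
    try ring
  have hreA : ∀ θ : ℝ,
      (-2 * (circleMap 0 r0 θ)^2 + 4 * (circleMap 0 r0 θ) * (β:ℂ)).re ≤ 2*r0^2 + 4*r0*|β| := by
    intro θ
    refine (Complex.re_le_norm _).trans ?_
    refine (norm_add_le _ _).trans ?_
    have e1 : ‖(-2 * (circleMap 0 r0 θ)^2)‖ = 2 * r0^2 := by
      rw [norm_mul, norm_pow, habs_ζ]; simp
    have e2 : ‖(4 * (circleMap 0 r0 θ) * (β:ℂ))‖ = 4 * r0 * |β| := by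
      rw [norm_mul, norm_mul, habs_ζ]; simp
    rw [e1, e2]
  set A0 : ℝ := r0 * r0^l * ((c - r0)⁻¹ *
      (Real.exp (2*r0^2 + 4*r0*|β| + c^2 + 2*c*y) *
        (c^u + Real.exp ((u.toNat : ℝ)*c + (u.toNat : ℝ)^2)))) with hA0
  have hwpos : ∀ s : ℝ, 0 < ‖w s‖ := fun s => lt_of_lt_of_le hc0 (habs_w_ge s)
  have hwne0 : ∀ s : ℝ, w s ≠ 0 := by
    intro s h
    have := hwpos s
    rw [h] at this
    simp at this
  have hnorm : ∀ θ s : ℝ, ‖F θ s‖ = r0 * r0^l *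
      (‖circleMap 0 r0 θ - w s‖⁻¹ *
        ((Real.exp ((-2 * (circleMap 0 r0 θ)^2 + 4 * (circleMap 0 r0 θ) * (β:ℂ)).re) /
          Real.exp ((-(w s) ^ 2 - 2 * (w s) * (y:ℂ)).re)) * ‖w s‖^u)) := by
    intro θ s
    simp only [hF, hg, norm_mul, norm_inv, norm_div, norm_pow, norm_zpow,
      Complex.norm_exp, Complex.norm_I, habs_ζ]
    ring
  have hbound : ∀ θ s : ℝ, ‖F θ s‖ ≤ A0 * Real.exp (-(3/4) * s^2) := by
    intro θ s
    rw [hnorm θ s, hreB s, hA0]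
    exact bound_aux r0 c β y h0 hrc u l s _ _ _ (habs_sub θ s) (habs_w_ge s) (habs_w_le s)
      (hreA θ)
  -- continuity / measurability
  have hζc : Continuous fun p : ℝ × ℝ => circleMap 0 r0 p.1 :=
    (continuous_circleMap 0 r0).comp continuous_fst
  have hwc : Continuous fun p : ℝ × ℝ => w p.2 := by
    simp only [hw]
    exact continuous_const.add ((Complex.continuous_ofReal.comp continuous_snd).mul continuous_const)
  have hcont : Continuous (Function.uncurry F) := by
    have hsub : Continuous fun p : ℝ × ℝ => (circleMap 0 r0 p.1 - w p.2)⁻¹ :=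
      (hζc.sub hwc).inv₀ (fun p => hne p.1 p.2)
    have hA : Continuous fun p : ℝ × ℝ =>
        Complex.exp (-2 * (circleMap 0 r0 p.1)^2 + 4 * (circleMap 0 r0 p.1) * (β:ℂ)) :=
      ((continuous_const.mul (hζc.pow 2)).add ((continuous_const.mul hζc).mul continuous_const)).cexp
    have hB : Continuous fun p : ℝ × ℝ => Complex.exp (-(w p.2)^2 - 2*(w p.2)*(y:ℂ)) :=
      (((hwc.pow 2).neg).sub ((continuous_const.mul hwc).mul continuous_const)).cexp
    have hwu : Continuous fun p : ℝ × ℝ => (w p.2)^u :=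
      hwc.zpow₀ u (fun p => Or.inl (hwne0 p.2))
    have : Continuous fun p : ℝ × ℝ => F p.1 p.2 := by
      simp only [hF, hg]
      exact (hζc.mul continuous_const).mul
        ((((hsub.mul (hA.div hB (fun p => Complex.exp_ne_zero _))).mul (hζc.pow l)).mul hwu).mul
          continuous_const)
    exact this
  have hInt : Integrable (Function.uncurry F) (μ.prod volume) := by
    have h1 : Integrable (fun _ : ℝ => A0) μ := by
      rw [hμ]
      exact integrableOn_const measure_Ioc_lt_top.ne
    have h2 : Integrable (fun s : ℝ => Real.exp (-(3/4) * s^2)) :=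
      integrable_exp_neg_mul_sq (by norm_num : (0:ℝ) < 3/4)
    exact (h1.mul_prod h2).mono' hcont.aestronglyMeasurable
      (Filter.Eventually.of_forall fun p => hbound p.1 p.2)
  -- main computation
  have step1 : (∮ ζ in C(0, r0), lineInt c (fun ω =>
      (ζ - ω)⁻¹ * (Complex.exp (-2 * ζ ^ 2 + 4 * ζ * (β : ℂ))
        / Complex.exp (-ω ^ 2 - 2 * ω * (y : ℂ))) * ζ ^ l * ω ^ u))
      = ∫ θ, (∫ s : ℝ, F θ s) ∂μ := by
    rw [circleIntegral, intervalIntegral.integral_of_le Real.two_pi_pos.le]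
    refine integral_congr_ae (Filter.Eventually.of_forall fun θ => ?_)
    beta_reduce
    rw [deriv_circleMap, smul_eq_mul]
    simp only [lineInt]
    rw [← integral_const_mul]
  have inner0 : ∀ s : ℝ, (∫ θ, F θ s ∂μ) = 0 := by
    intro s
    have hmem : w s ∉ closedBall (0:ℂ) r0 := by
      intro hmem
      rw [mem_closedBall, Complex.dist_eq, sub_zero] at hmem
      have := habs_w_ge s
      linarith
    have hcirc : (∫ θ, F θ s ∂μ) = ∮ ζ in C(0, r0),
        ((ζ - w s)⁻¹ * (Complex.exp (-2 * ζ ^ 2 + 4 * ζ * (β:ℂ))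
          / Complex.exp (-(w s) ^ 2 - 2 * (w s) * (y:ℂ))) * ζ ^ l * (w s) ^ u * Complex.I) := by
      rw [circleIntegral, intervalIntegral.integral_of_le Real.two_pi_pos.le]
      refine integral_congr_ae (Filter.Eventually.of_forall fun θ => ?_)
      beta_reduce
      rw [deriv_circleMap, smul_eq_mul]
    rw [hcirc]
    exact auxCauchyZero r0 h0.le hmem (β:ℂ) _ _ l
  rw [step1, integral_integral_swap hInt]
  simp only [inner0, integral_zero]

end Aux

set_option maxHeartbeats 1000000 in
/-- `ℬ^{β,y}_u(λ)` vanishes whenever `λ ≥ 0` and `u + λ ≥ 0`; consequently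
`ℬ^{β,y₂−β}_{u₂}(λ−ρ) = 0` for `λ ≥ max(ρ, ρ−u₂)`, so the perturbation sum defining the
tacnode GUE-minor kernel truncates to `λ ≤ max(ρ−1, ρ−1−u₂)`: the tacnode GUE-minor
kernel is a finite-rank perturbation of the GUE-minor kernel. -/
theorem stmt12 (r0 c β : ℝ) (h0 : 0 < r0) (hrc : r0 < c) :
    (∀ (y : ℝ) (u lam : ℤ), 0 ≤ lam → 0 ≤ u + lam → calB r0 c β y u lam = 0)
    ∧ ∀ (ρ u2 : ℤ) (y2 : ℝ) (lam : ℤ), max ρ (ρ - u2) ≤ lam →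
        calB r0 c β (y2 - β) u2 (lam - ρ) = 0 := by
  have key : ∀ (y : ℝ) (u lam : ℤ), 0 ≤ lam → 0 ≤ u + lam → calB r0 c β y u lam = 0 := by
    intro y u lam hlam hul
    obtain ⟨l, hl'⟩ := Int.eq_ofNat_of_zero_le hlam
    obtain ⟨n, hn⟩ := Int.eq_ofNat_of_zero_le hul
    rw [calB]
    have h1 : (∮ ζ in C(0, r0), lineInt c (fun ω =>
        (ζ - ω)⁻¹ * (Complex.exp (-2 * ζ ^ 2 + 4 * ζ * (β : ℂ))
          / Complex.exp (-ω ^ 2 - 2 * ω * (y : ℂ))) * ζ ^ lam * ω ^ u)) = 0 := by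
      simp only [hl', zpow_natCast]
      exact double_zero r0 c β y h0 hrc u l
    have h2 : (∮ ω in C(0, r0),
        ω ^ (u + lam) / Complex.exp (ω ^ 2 - 2 * ω * ((y : ℂ) + 2 * (β : ℂ)))) = 0 := by
      simp only [hn, zpow_natCast]
      exact single_zero r0 h0.le ((y : ℂ) + 2 * (β : ℂ)) n
    rw [h1, h2, mul_zero, mul_zero, add_zero]
  refine ⟨key, fun ρ u2 y2 lam hmax => ?_⟩
  have h1 := le_trans (le_max_left ρ (ρ - u2)) hmax
  have h2 := le_trans (le_max_right ρ (ρ - u2)) hmax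
  exact key (y2 - β) u2 (lam - ρ) (by omega) (by omega)
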